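/- Let Y ∈ F_q^{N×(n+m)} and let (r, L̂, Ê) ∈ F_q^{n×m} × F_q^{n×μ} × F_q^{δ×m} be a reduction of Y, i.e., there exists U ⊆ {1,…,n} with |U| = μ, I_U^T r = 0, I_U^T L̂ = −I_{μ×μ}, rank Ê = δ, and such that the row space of [[I_n + L̂ I_U^T , r],[0 , Ê]] equals the row space of Y. Then for every x ∈ F_q^{n×m}, with X = [I_n | x], the subspace distance satisfies d_S(⟨X⟩, ⟨Y⟩) = 2·rank [[L̂ , r − x],[0 , Ê]] − (μ + δ). -/

import Mathlib

/-!
Write `K = I_Uᵀ`, so that `K L = -1` and `K r = 0`. Then `1 + L K` is idempotent with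
complement `-L K` of rank `μ`, whence `dim ⟨Y⟩ = n - μ + δ`. Modulo `⟨[I | x]⟩` a row `[a | b]`
is determined by `b - a x`, so `dim (⟨X⟩ + ⟨Y⟩) = n + rank [S; E]` with `S = r - x - L K x`.
A column operation turns `[[L, r - x], [0, E]]` into `[[L, S], [0, E]]`, and as `K L = -1`,
`K S = 0` the block `L` splits off, giving rank `μ + rank [S; E]`. Conclude with
`d_S(A, B) = 2 dim (A + B) - dim A - dim B`.
-/

open Matrix

/-- The row space of a matrix: the span of its rows. -/
noncomputable def rowSpace {F : Type*} [Field F] {ι κ : Type*}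
    (M : Matrix ι κ F) : Submodule F (κ → F) :=
  Submodule.span F (Set.range fun i => M i)

/-- The subspace distance `d_S(U,V) = dim(U + V) - dim(U ∩ V)`. -/
noncomputable def sDist {F : Type*} [Field F] {κ : Type*}
    (U V : Submodule F (κ → F)) : ℕ :=
  Module.finrank F ↥(U ⊔ V) - Module.finrank F ↥(U ⊓ V)

/-- `I_U`: the `n × μ` matrix whose columns are the columns of the `n × n`
identity matrix indexed by the set `U` (in increasing order). -/
def unitColumns (F : Type*) [Field F] {n μ : ℕ}
    (U : Finset (Fin n)) (hU : U.card = μ) : Matrix (Fin n) (Fin μ) F :=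
  Matrix.of fun i k => if i = U.orderEmbOfFin hU k then 1 else 0

namespace Matrix

variable {F : Type*} [Field F]

lemma rank_fromBlocks_zero_zero {m n m' n' : Type*} [Fintype n] [Fintype n']
    (A : Matrix m n F) (D : Matrix m' n' F) :
    (fromBlocks A 0 0 D).rank = A.rank + D.rank := by
  have hsplit : (fromBlocks A 0 0 D).mulVecLin =
      (LinearEquiv.sumArrowLequivProdArrow m m' F F).symm.toLinearMap ∘ₗ
        A.mulVecLin.prodMap D.mulVecLin ∘ₗ
          (LinearEquiv.sumArrowLequivProdArrow n n' F F).toLinearMap := by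
    ext v (i | i) <;> simp [fromBlocks_mulVec] <;> rfl
  have hprod : A.mulVecLin.range.prod D.mulVecLin.range =
      LinearMap.range (A.mulVecLin.range.subtype.prodMap D.mulVecLin.range.subtype) := by
    rw [LinearMap.range_prodMap, Submodule.range_subtype, Submodule.range_subtype]
  rw [rank, hsplit, LinearMap.range_comp,
    LinearMap.range_comp_of_range_eq_top _ (LinearEquiv.range _), LinearEquiv.finrank_map_eq,
    LinearMap.range_prodMap, hprod,
    LinearMap.finrank_range_of_inj (Subtype.val_injective.prodMap Subtype.val_injective),
    Module.finrank_prod]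
  rfl

lemma rank_mul_eq_right_of_mul_eq_one {l m n : Type*} [Fintype l] [Fintype m] [Fintype n]
    [DecidableEq n] {A : Matrix m n F} {A' : Matrix n m F} (h : A' * A = 1) (B : Matrix n l F) :
    (A * B).rank = B.rank :=
  le_antisymm (rank_mul_le_right A B) <| by
    simpa [← Matrix.mul_assoc, h] using rank_mul_le_right A' (A * B)

lemma rank_eq_card_of_mul_eq_one {m n : Type*} [Fintype m] [Fintype n] [DecidableEq m]
    {A : Matrix m n F} {B : Matrix n m F} (h : A * B = 1) : A.rank = Fintype.card m :=
  le_antisymm (rank_le_card_height A) <| by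
    simpa [h, rank_one] using rank_mul_le_left A B

-- The identity blocks are typed explicitly throughout: if a block's index type is left to
-- unification, `*` can elaborate through the heterogeneous `CStarMatrix` multiplication.
lemma rank_mul_fromBlocks_one_zero_one {l m n : Type*} [Fintype m] [Fintype n] [DecidableEq m]
    [DecidableEq n] (M : Matrix l (m ⊕ n) F) (C : Matrix m n F) :
    (M * fromBlocks (1 : Matrix m m F) C 0 (1 : Matrix n n F)).rank = M.rank :=
  rank_mul_eq_left_of_isUnit_det _ _ (by simp)

lemma rank_add_rank_one_sub_of_isIdempotentElem {n : Type*} [Fintype n] [DecidableEq n]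
    {e : Matrix n n F} (he : IsIdempotentElem e) :
    e.rank + (1 - e).rank = Fintype.card n := by
  have hker : LinearMap.ker e.mulVecLin = LinearMap.range (1 - e).mulVecLin := by
    ext v
    simp only [LinearMap.mem_ker, LinearMap.mem_range, mulVecLin_apply]
    constructor
    · intro hv
      exact ⟨v, by simp [sub_mulVec, hv]⟩
    · rintro ⟨w, rfl⟩
      rw [mulVec_mulVec, Matrix.mul_sub, Matrix.mul_one, he.eq, sub_self, zero_mulVec]
  rw [rank, rank, ← hker, LinearMap.finrank_range_add_finrank_ker,
    Module.finrank_fintype_fun_eq_card]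

lemma rank_one_add_mul_add_card {ι μ : Type*} [Fintype ι] [Fintype μ] [DecidableEq ι]
    [DecidableEq μ] {L : Matrix ι μ F} {K : Matrix μ ι F} {J : Matrix ι μ F}
    (hKL : K * L = -1) (hKJ : K * J = 1) :
    (1 + L * K).rank + Fintype.card μ = Fintype.card ι := by
  have hsq : L * K * (L * K) = -(L * K) := by
    rw [← Matrix.mul_assoc, Matrix.mul_assoc L, hKL, Matrix.mul_neg, Matrix.mul_one,
      Matrix.neg_mul]
  have hidem : IsIdempotentElem (1 + L * K) := by
    simp only [IsIdempotentElem, Matrix.add_mul, Matrix.mul_add, Matrix.one_mul, Matrix.mul_one,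
      hsq]
    abel
  have hcompl : 1 - (1 + L * K) = -L * K := by rw [sub_add_cancel_left, ← Matrix.neg_mul]
  have hleft : K * -L = 1 := by rw [Matrix.mul_neg, hKL, neg_neg]
  rw [← rank_add_rank_one_sub_of_isIdempotentElem hidem, hcompl,
    rank_mul_eq_right_of_mul_eq_one hleft, rank_eq_card_of_mul_eq_one hKJ]

lemma rank_fromBlocks_self_mul_zero {ι κ μ δ : Type*} [Fintype κ] [Fintype μ] [DecidableEq κ]
    [DecidableEq μ] (P : Matrix ι κ F) (C : Matrix κ μ F) (E : Matrix δ μ F) :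
    (fromBlocks P (P * C) 0 E).rank = P.rank + E.rank := by
  have hcol : fromBlocks P (P * C) 0 E * fromBlocks 1 (-C) 0 (1 : Matrix μ μ F)
      = fromBlocks P 0 0 E := by
    simp [fromBlocks_multiply]
  rw [← rank_mul_fromBlocks_one_zero_one _ (-C), hcol, rank_fromBlocks_zero_zero]

lemma rank_fromCols_of_mul_eq_one {ι μ κ : Type*} [Fintype ι] [Fintype μ] [Fintype κ]
    [DecidableEq ι] [DecidableEq μ] {L : Matrix ι μ F} {W : Matrix ι κ F} {K : Matrix μ ι F}
    (hKL : K * L = 1) (hKW : K * W = 0) :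
    (fromCols L W).rank = Fintype.card μ + W.rank := by
  have hinv : fromCols L (1 : Matrix ι ι F) * fromRows K (1 - L * K) = 1 := by
    rw [fromCols_mul_fromRows, Matrix.one_mul, add_sub_cancel]
  have hblock : fromRows K (1 - L * K) * fromCols L W = fromBlocks 1 0 0 W := by
    rw [fromRows_mul_fromCols, hKL, hKW, Matrix.sub_mul, Matrix.sub_mul, Matrix.one_mul,
      Matrix.one_mul, Matrix.mul_assoc, hKL, Matrix.mul_one, Matrix.mul_assoc, hKW,
      Matrix.mul_zero, sub_self, sub_zero]
  rw [← rank_mul_eq_right_of_mul_eq_one hinv, hblock, rank_fromBlocks_zero_zero, rank_one]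

lemma rank_fromRows_fromCols_one {n κ ι : Type*} [Fintype n] [Fintype κ] [Fintype ι]
    [DecidableEq n] [DecidableEq ι] [DecidableEq κ]
    (x : Matrix n κ F) (A : Matrix ι n F) (B : Matrix ι κ F) :
    (fromRows (fromCols (1 : Matrix n n F) x) (fromCols A B)).rank
      = Fintype.card n + (B - A * x).rank := by
  have hcol : fromRows (fromCols 1 x) (fromCols A B) * fromBlocks 1 (-x) 0 (1 : Matrix κ κ F)
      = fromBlocks 1 0 A (B - A * x) := by
    rw [fromRows_fromCols_eq_fromBlocks, fromBlocks_multiply]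
    simp [sub_eq_neg_add]
  have hrow : fromBlocks (1 : Matrix n n F) 0 (-A) (1 : Matrix ι ι F)
      * fromBlocks (1 : Matrix n n F) 0 A (B - A * x) = fromBlocks 1 0 0 (B - A * x) := by
    simp [fromBlocks_multiply]
  rw [← rank_mul_fromBlocks_one_zero_one _ (-x), hcol,
    ← rank_mul_eq_right_of_isUnit_det (fromBlocks (1 : Matrix n n F) 0 (-A) (1 : Matrix ι ι F)) _
      (by simp),
    hrow, rank_fromBlocks_zero_zero, rank_one]

end Matrix

section RowSpace

variable {F : Type*} [Field F]

lemma finrank_rowSpace {ι κ : Type*} [Fintype ι] [Fintype κ] (M : Matrix ι κ F) :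
    Module.finrank F (rowSpace M) = M.rank :=
  M.rank_eq_finrank_span_row.symm

lemma rowSpace_fromRows {ι₁ ι₂ κ : Type*} (A : Matrix ι₁ κ F) (B : Matrix ι₂ κ F) :
    rowSpace (fromRows A B) = rowSpace A ⊔ rowSpace B := by
  rw [rowSpace, rowSpace, rowSpace, ← Submodule.span_union, ← Set.Sum.elim_range]
  rfl

lemma sDist_eq_two_mul_finrank_sup_sub {κ : Type*} [Fintype κ] (U V : Submodule F (κ → F)) :
    (sDist U V : ℤ) =
      2 * Module.finrank F ↥(U ⊔ V) - Module.finrank F U - Module.finrank F V := by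
  have hsum := Submodule.finrank_sup_add_finrank_inf_eq U V
  have hle := Submodule.finrank_mono (inf_le_left.trans le_sup_left : U ⊓ V ≤ U ⊔ V)
  rw [sDist, Nat.cast_sub hle]
  omega

lemma finrank_rowSpace_fromCols_one {ι κ : Type*} [Fintype ι] [Fintype κ] [DecidableEq ι]
    (x : Matrix ι κ F) :
    Module.finrank F (rowSpace (fromCols (1 : Matrix ι ι F) x)) = Fintype.card ι := by
  rw [finrank_rowSpace, rank_eq_card_of_mul_eq_one (B := fromRows 1 0)
    (by simp [fromCols_mul_fromRows])]

end RowSpace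

section Reduction

variable {F : Type*} [Field F] {ι μ κ δ : Type*} {L : Matrix ι μ F} {K : Matrix μ ι F}
  {r : Matrix ι κ F}

lemma rank_fromBlocks_one_add_mul_add_card [Fintype ι] [Fintype μ] [Fintype κ] [DecidableEq ι]
    [DecidableEq μ] [DecidableEq κ] {J : Matrix ι μ F} (E : Matrix δ κ F)
    (hKL : K * L = -1) (hKJ : K * J = 1) (hKr : K * r = 0) :
    (fromBlocks (1 + L * K) r 0 E).rank + Fintype.card μ = Fintype.card ι + E.rank := by
  have hr : (1 + L * K) * r = r := by
    rw [Matrix.add_mul, Matrix.one_mul, Matrix.mul_assoc, hKr, Matrix.mul_zero, add_zero]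
  rw [← hr, rank_fromBlocks_self_mul_zero, add_right_comm, rank_one_add_mul_add_card hKL hKJ]

lemma rank_fromRows_fromCols_one_fromBlocks [Fintype ι] [Fintype μ] [Fintype κ] [Fintype δ]
    [DecidableEq ι] [DecidableEq κ] [DecidableEq δ] (E : Matrix δ κ F) (x : Matrix ι κ F) :
    (fromRows (fromCols 1 x) (fromBlocks (1 + L * K) r 0 E)).rank
      = Fintype.card ι + (fromRows (r - x - L * (K * x)) E).rank := by
  have hS : r - (1 + L * K) * x = r - x - L * (K * x) := by
    simp only [Matrix.add_mul, Matrix.one_mul, Matrix.mul_assoc]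
    abel
  have hdiff : fromRows r E - fromRows (1 + L * K) 0 * x = fromRows (r - x - L * (K * x)) E := by
    ext (i | i) j <;> simp [← hS]
  rw [← fromCols_fromRows_eq_fromBlocks, rank_fromRows_fromCols_one, hdiff]

lemma rank_fromBlocks_sub_eq [Fintype ι] [Fintype μ] [Fintype κ] [Fintype δ] [DecidableEq ι]
    [DecidableEq μ] [DecidableEq κ] [DecidableEq δ] (E : Matrix δ κ F) (hKL : K * L = -1)
    (hKr : K * r = 0) (x : Matrix ι κ F) :
    (fromBlocks L (r - x) 0 E).rank
      = Fintype.card μ + (fromRows (r - x - L * (K * x)) E).rank := by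
  have hKS : K * (r - x - L * (K * x)) = 0 := by
    simp only [Matrix.mul_sub, ← Matrix.mul_assoc, hKr, hKL, Matrix.neg_mul, Matrix.one_mul]
    abel
  have hcol : fromBlocks L (r - x) 0 E * fromBlocks 1 (-(K * x)) 0 (1 : Matrix κ κ F)
      = fromCols (fromRows L 0) (fromRows (r - x - L * (K * x)) E) := by
    rw [fromCols_fromRows_eq_fromBlocks, fromBlocks_multiply, fromBlocks_inj]
    refine ⟨by simp, ?_, by simp, by simp⟩
    simp only [Matrix.mul_neg, Matrix.mul_one]
    abel
  rw [← rank_mul_fromBlocks_one_zero_one _ (-(K * x)), hcol,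
    rank_fromCols_of_mul_eq_one (K := fromCols (-K) 0) (by simp [fromCols_mul_fromRows, hKL])
      (by simp [fromCols_mul_fromRows, hKS])]

end Reduction

lemma unitColumns_transpose_mul_self {F : Type*} [Field F] {n μ : ℕ} (U : Finset (Fin n))
    (hU : U.card = μ) : (unitColumns F U hU)ᵀ * unitColumns F U hU = 1 := by
  ext k k'
  simp [Matrix.mul_apply, unitColumns, Matrix.one_apply, eq_comm]

theorem sDist_of_reduction_general
    {F : Type*} [Field F] {N n m μ δ : ℕ}
    (Y : Matrix (Fin N) (Fin n ⊕ Fin m) F)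
    (r : Matrix (Fin n) (Fin m) F) (L : Matrix (Fin n) (Fin μ) F)
    (E : Matrix (Fin δ) (Fin m) F)
    (U : Finset (Fin n)) (hU : U.card = μ)
    (h1 : (unitColumns F U hU)ᵀ * r = 0)
    (h2 : (unitColumns F U hU)ᵀ * L = -1)
    (h3 : E.rank = δ)
    (h4 : rowSpace (Matrix.fromBlocks
        (1 + L * (unitColumns F U hU)ᵀ) r 0 E) = rowSpace Y)
    (x : Matrix (Fin n) (Fin m) F) :
    (sDist (rowSpace (Matrix.fromCols (1 : Matrix (Fin n) (Fin n) F) x))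
        (rowSpace Y) : ℤ)
      = 2 * ((Matrix.fromBlocks L (r - x) 0 E).rank : ℤ) - ((μ : ℤ) + (δ : ℤ)) := by
  have hY : Module.finrank F (rowSpace Y) + μ = n + δ := by
    rw [← h4, finrank_rowSpace]
    simpa [h3] using
      rank_fromBlocks_one_add_mul_add_card E h2 (unitColumns_transpose_mul_self U hU) h1
  have hsup : Module.finrank F ↥(rowSpace (fromCols (1 : Matrix (Fin n) (Fin n) F) x) ⊔
      rowSpace Y) = n + (fromRows (r - x - L * ((unitColumns F U hU)ᵀ * x)) E).rank := by
    rw [← h4, ← rowSpace_fromRows, finrank_rowSpace, rank_fromRows_fromCols_one_fromBlocks,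
      Fintype.card_fin]
  rw [sDist_eq_two_mul_finrank_sup_sub, hsup, finrank_rowSpace_fromCols_one,
    rank_fromBlocks_sub_eq E h2 h1 x, Fintype.card_fin, Fintype.card_fin]
  push_cast
  omega

/-- if `(r, L, E)` is a reduction of `Y` then, for every `x`,
`d_S(⟨[I | x]⟩, ⟨Y⟩) = 2·rank [[L, r − x],[0, E]] − (μ + δ)`. -/
theorem sDist_of_reduction
    {F : Type*} [Field F] [Fintype F] [DecidableEq F] {N n m μ δ : ℕ}
    (Y : Matrix (Fin N) (Fin n ⊕ Fin m) F)
    (r : Matrix (Fin n) (Fin m) F) (L : Matrix (Fin n) (Fin μ) F)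
    (E : Matrix (Fin δ) (Fin m) F)
    (U : Finset (Fin n)) (hU : U.card = μ)
    (h1 : (unitColumns F U hU)ᵀ * r = 0)
    (h2 : (unitColumns F U hU)ᵀ * L = -1)
    (h3 : E.rank = δ)
    (h4 : rowSpace (Matrix.fromBlocks
        (1 + L * (unitColumns F U hU)ᵀ) r 0 E) = rowSpace Y)
    (x : Matrix (Fin n) (Fin m) F) :
    (sDist (rowSpace (Matrix.fromCols (1 : Matrix (Fin n) (Fin n) F) x))
        (rowSpace Y) : ℤ)
      = 2 * ((Matrix.fromBlocks L (r - x) 0 E).rank : ℤ) - ((μ : ℤ) + (δ : ℤ)) :=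
  sDist_of_reduction_general Y r L E U hU h1 h2 h3 h4 x
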